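/- Let α and β be Borel probability measures on ℝ^d, U : ℝ^d → ℝ continuous, and s : ℝ × ℝ^d → ℝ continuously differentiable solving the deterministic Hamilton–Jacobi–Bellman equation ∂_t s(t,x) = ½‖∇_x s(t,x)‖² − U(x) for all t ∈ [0,1] and x ∈ ℝ^d. Let Φ* : ℝ × ℝ^d → ℝ^d be measurable with t ↦ Φ*(t, ω) continuously differentiable on [0,1] for each ω, Φ*(0, ω) = ω, ∂_t Φ*(t, ω) = −∇_x s(t, Φ*(t, ω)) for all t ∈ [0,1] and ω, and the pushforward of α under ω ↦ Φ*(1, ω) equal to β. Assume ω ↦ s(0, ω) is α-integrable and y ↦ s(1, y) is β-integrable. Then: (i) the total cost of the gradient flow equals the dual value, ∫ [ ∫₀¹ ( ½‖∂_t Φ*(t, ω)‖² + U(Φ*(t, ω)) ) dt ] dα(ω) = ∫ s(0, ω) dα(ω) − ∫ s(1, y) dβ(y); and (ii) for every measurable Φ : ℝ × ℝ^d → ℝ^d with t ↦ Φ(t, ω) continuously differentiable on [0,1] for each ω, Φ(0, ω) = ω, pushforward of α under ω ↦ Φ(1, ω) equal to β, and α-integrable total cost, the total cost of Φ is at least the total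 cost of Φ*. -/

import Mathlib

/-!
Along any path `φ` the chain rule and the HJB equation give
`d/dt s(t, φ t) = ½‖∇s‖² − U(φ) + ⟪∇s, φ'⟫`, and completing the square turns this into the
action identity
`∫₀¹ (½‖φ'‖² + U(φ)) = ∫₀¹ ½‖φ' + ∇s(t, φ)‖² + s(0, φ 0) − s(1, φ 1)`.
The square vanishes exactly along the gradient flow, so its action is `s(0, ω) − s(1, Φ*(1, ω))`,
while every other path has action at least this. Integrating against `α`, the pushforward
condition replaces `∫ s(1, Φ(1, ω)) dα` by `∫ s(1, ·) dβ` for every admissible `Φ`, so both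
costs are compared with the same dual value.
-/

open MeasureTheory InnerProductSpace Set

section HJB

variable {E : Type*} [NormedAddCommGroup E] [InnerProductSpace ℝ E] [CompleteSpace E]
  {s : ℝ → E → ℝ}

theorem hasGradientAt_of_differentiable_uncurry
    (hs : Differentiable ℝ (fun q : ℝ × E => s q.1 q.2)) (t : ℝ) (x : E) :
    HasGradientAt (s t) ((toDual ℝ E).symm
      ((fderiv ℝ (fun q : ℝ × E => s q.1 q.2) (t, x)).comp (ContinuousLinearMap.inr ℝ ℝ E))) x :=
  ((hs (t, x)).hasFDerivAt.comp x (hasFDerivAt_prodMk_right t x)).hasGradientAt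

theorem continuous_gradient_of_contDiff_uncurry
    (hs : ContDiff ℝ 1 (fun q : ℝ × E => s q.1 q.2)) :
    Continuous (fun q : ℝ × E => gradient (s q.1) q.2) := by
  have hgrad : (fun q : ℝ × E => gradient (s q.1) q.2) = fun q => (toDual ℝ E).symm
      ((fderiv ℝ (fun q : ℝ × E => s q.1 q.2) q).comp (ContinuousLinearMap.inr ℝ ℝ E)) :=
    funext fun q => (hasGradientAt_of_differentiable_uncurry (hs.differentiable one_ne_zero)
      q.1 q.2).gradient
  rw [hgrad]
  exact (toDual ℝ E).symm.continuous.comp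
    ((hs.continuous_fderiv one_ne_zero).clm_comp continuous_const)

theorem hasDerivAt_comp_path (hs : Differentiable ℝ (fun q : ℝ × E => s q.1 q.2))
    {φ : ℝ → E} {v : E} {t : ℝ} (hφ : HasDerivAt φ v t) :
    HasDerivAt (fun τ => s τ (φ τ))
      (deriv (fun τ => s τ (φ t)) t + ⟪gradient (s t) (φ t), v⟫_ℝ) t := by
  set L := fderiv ℝ (fun q : ℝ × E => s q.1 q.2) (t, φ t)
  have hL : HasFDerivAt (fun q : ℝ × E => s q.1 q.2) L (t, φ t) := (hs _).hasFDerivAt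
  have htime : HasDerivAt (fun τ => s τ (φ t)) (L (1, 0)) t := by
    exact hL.comp_hasDerivAt t ((hasDerivAt_id t).prodMk (hasDerivAt_const t (φ t)))
  have hspace : ⟪gradient (s t) (φ t), v⟫_ℝ = L (0, v) := by
    rw [(hasGradientAt_of_differentiable_uncurry hs t (φ t)).gradient, toDual_symm_apply]
    rfl
  have hsplit : L (1, v) = L (1, 0) + L (0, v) := by
    rw [← map_add, Prod.mk_add_mk, add_zero, zero_add]
  rw [htime.deriv, hspace, ← hsplit]
  exact hL.comp_hasDerivAt t ((hasDerivAt_id t).prodMk hφ)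

variable {U : E → ℝ} {a b : ℝ}

theorem integral_action_eq (hab : a ≤ b) (hU : Continuous U)
    (hs : ContDiff ℝ 1 (fun q : ℝ × E => s q.1 q.2))
    (hHJB : ∀ t ∈ Icc a b, ∀ x : E,
      deriv (fun τ => s τ x) t = 1 / 2 * ‖gradient (s t) x‖ ^ 2 - U x)
    {φ φ' : ℝ → E} (hφ : ∀ t ∈ Icc a b, HasDerivAt φ (φ' t) t)
    (hφ' : ContinuousOn φ' (Icc a b)) :
    ∫ t in a..b, (1 / 2 * ‖φ' t‖ ^ 2 + U (φ t)) =
      (∫ t in a..b, 1 / 2 * ‖φ' t + gradient (s t) (φ t)‖ ^ 2) + (s a (φ a) - s b (φ b)) := by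
  set G : ℝ → E := fun t => gradient (s t) (φ t)
  set D : ℝ → ℝ := fun t => 1 / 2 * ‖G t‖ ^ 2 - U (φ t) + ⟪G t, φ' t⟫_ℝ
  have hφc : ContinuousOn φ (Icc a b) := fun t ht => (hφ t ht).continuousAt.continuousWithinAt
  have hGc : ContinuousOn G (Icc a b) :=
    (continuous_gradient_of_contDiff_uncurry hs).comp_continuousOn (continuousOn_id.prodMk hφc)
  have hIcc : uIcc a b = Icc a b := uIcc_of_le hab
  have hDint : IntervalIntegrable D volume a b := by
    refine ContinuousOn.intervalIntegrable (hIcc ▸ ?_)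
    exact ((continuousOn_const.mul (hGc.norm.pow 2)).sub (hU.comp_continuousOn hφc)).add
      (hGc.inner hφ')
  have hSqint : IntervalIntegrable (fun t => 1 / 2 * ‖φ' t + G t‖ ^ 2) volume a b :=
    ContinuousOn.intervalIntegrable (hIcc ▸ continuousOn_const.mul ((hφ'.add hGc).norm.pow 2))
  have hFTC : ∫ t in a..b, D t = s b (φ b) - s a (φ a) := by
    refine intervalIntegral.integral_eq_sub_of_hasDerivAt (f := fun t => s t (φ t))
      (fun t ht => ?_) hDint
    rw [hIcc] at ht
    simpa only [D, G, hHJB t ht] using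
      hasDerivAt_comp_path (hs.differentiable one_ne_zero) (hφ t ht)
  have hsquare : ∀ t, 1 / 2 * ‖φ' t‖ ^ 2 + U (φ t) = 1 / 2 * ‖φ' t + G t‖ ^ 2 - D t := by
    intro t
    rw [norm_add_sq_real, real_inner_comm]
    ring
  simp only [hsquare]
  rw [intervalIntegral.integral_sub hSqint hDint, hFTC]
  ring

theorem integral_action_of_gradient_flow (hab : a ≤ b) (hU : Continuous U)
    (hs : ContDiff ℝ 1 (fun q : ℝ × E => s q.1 q.2))
    (hHJB : ∀ t ∈ Icc a b, ∀ x : E,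
      deriv (fun τ => s τ x) t = 1 / 2 * ‖gradient (s t) x‖ ^ 2 - U x)
    {φ : ℝ → E} (hφ : ∀ t ∈ Icc a b, HasDerivAt φ (-gradient (s t) (φ t)) t) :
    ∫ t in a..b, (1 / 2 * ‖gradient (s t) (φ t)‖ ^ 2 + U (φ t)) = s a (φ a) - s b (φ b) := by
  have hφc : ContinuousOn φ (Icc a b) := fun t ht => (hφ t ht).continuousAt.continuousWithinAt
  have hφ' : ContinuousOn (fun t => -gradient (s t) (φ t)) (Icc a b) :=
    ((continuous_gradient_of_contDiff_uncurry hs).comp_continuousOn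
      (continuousOn_id.prodMk hφc)).neg
  simpa using integral_action_eq hab hU hs hHJB hφ hφ'

theorem sub_le_integral_action (hab : a ≤ b) (hU : Continuous U)
    (hs : ContDiff ℝ 1 (fun q : ℝ × E => s q.1 q.2))
    (hHJB : ∀ t ∈ Icc a b, ∀ x : E,
      deriv (fun τ => s τ x) t = 1 / 2 * ‖gradient (s t) x‖ ^ 2 - U x)
    {φ φ' : ℝ → E} (hφ : ∀ t ∈ Icc a b, HasDerivAt φ (φ' t) t)
    (hφ' : ContinuousOn φ' (Icc a b)) :
    s a (φ a) - s b (φ b) ≤ ∫ t in a..b, (1 / 2 * ‖φ' t‖ ^ 2 + U (φ t)) := by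
  rw [integral_action_eq hab hU hs hHJB hφ hφ', le_add_iff_nonneg_left]
  exact intervalIntegral.integral_nonneg hab fun t _ => by positivity

end HJB

theorem integral_sub_comp_of_map_eq {X Y : Type*} [MeasurableSpace X] [MeasurableSpace Y]
    {α : Measure X} {β : Measure Y} {Ψ : X → Y} {f : X → ℝ} {g : Y → ℝ}
    (hΨ : AEMeasurable Ψ α) (hpush : α.map Ψ = β) (hf : Integrable f α) (hg : Integrable g β) :
    Integrable (fun ω => f ω - g (Ψ ω)) α ∧
      ∫ ω, (f ω - g (Ψ ω)) ∂α = ∫ ω, f ω ∂α - ∫ y, g y ∂β := by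
  subst hpush
  have hgΨ : Integrable (fun ω => g (Ψ ω)) α := hg.comp_aemeasurable hΨ
  exact ⟨hf.sub hgΨ, by rw [integral_sub hf hgΨ, integral_map hΨ hg.aestronglyMeasurable]⟩

theorem gsb_gradient_flow_optimality_general
    (d : ℕ)
    (α β : Measure (EuclideanSpace ℝ (Fin d)))
    (U : EuclideanSpace ℝ (Fin d) → ℝ) (hU : Continuous U)
    (s : ℝ → EuclideanSpace ℝ (Fin d) → ℝ)
    (hs : ContDiff ℝ 1 (fun q : ℝ × EuclideanSpace ℝ (Fin d) => s q.1 q.2))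
    (hHJB : ∀ t ∈ Set.Icc (0 : ℝ) 1, ∀ x : EuclideanSpace ℝ (Fin d),
      deriv (fun τ => s τ x) t = 1 / 2 * ‖gradient (s t) x‖ ^ 2 - U x)
    (Φstar : ℝ → EuclideanSpace ℝ (Fin d) → EuclideanSpace ℝ (Fin d))
    (hΦstarmeas : Measurable (fun q : ℝ × EuclideanSpace ℝ (Fin d) => Φstar q.1 q.2))
    (hΦstarderiv : ∀ ω : EuclideanSpace ℝ (Fin d), ∀ t ∈ Set.Icc (0 : ℝ) 1,
      HasDerivAt (fun τ => Φstar τ ω) (-gradient (s t) (Φstar t ω)) t)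
    (hΦstar₀ : ∀ ω : EuclideanSpace ℝ (Fin d), Φstar 0 ω = ω)
    (hstarpush : Measure.map (fun ω => Φstar 1 ω) α = β)
    (hs0_int : Integrable (fun ω => s 0 ω) α)
    (hs1_int : Integrable (fun y => s 1 y) β) :
    ((∫ ω, (∫ t in (0 : ℝ)..1,
        (1 / 2 * ‖gradient (s t) (Φstar t ω)‖ ^ 2 + U (Φstar t ω))) ∂α) =
      (∫ ω, s 0 ω ∂α) - ∫ y, s 1 y ∂β) ∧
    (∀ (Φ Φ' : ℝ → EuclideanSpace ℝ (Fin d) → EuclideanSpace ℝ (Fin d)),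
      Measurable (fun q : ℝ × EuclideanSpace ℝ (Fin d) => Φ q.1 q.2) →
      (∀ ω : EuclideanSpace ℝ (Fin d), ∀ t ∈ Set.Icc (0 : ℝ) 1,
        HasDerivAt (fun τ => Φ τ ω) (Φ' t ω) t) →
      (∀ ω : EuclideanSpace ℝ (Fin d),
        ContinuousOn (fun t => Φ' t ω) (Set.Icc (0 : ℝ) 1)) →
      (∀ ω : EuclideanSpace ℝ (Fin d), Φ 0 ω = ω) →
      Measure.map (fun ω => Φ 1 ω) α = β →
      Integrable
        (fun ω => ∫ t in (0 : ℝ)..1, (1 / 2 * ‖Φ' t ω‖ ^ 2 + U (Φ t ω))) α →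
      (∫ ω, (∫ t in (0 : ℝ)..1, (1 / 2 * ‖Φ' t ω‖ ^ 2 + U (Φ t ω))) ∂α) ≥
        ∫ ω, (∫ t in (0 : ℝ)..1,
          (1 / 2 * ‖gradient (s t) (Φstar t ω)‖ ^ 2 + U (Φstar t ω))) ∂α) := by
  have dual_value : ∀ Ψ : EuclideanSpace ℝ (Fin d) → EuclideanSpace ℝ (Fin d), Measurable Ψ →
      Measure.map Ψ α = β → Integrable (fun ω => s 0 ω - s 1 (Ψ ω)) α ∧
        ∫ ω, (s 0 ω - s 1 (Ψ ω)) ∂α = (∫ ω, s 0 ω ∂α) - ∫ y, s 1 y ∂β :=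
    fun Ψ hΨ hpush => integral_sub_comp_of_map_eq hΨ.aemeasurable hpush hs0_int hs1_int
  have star_cost : (∫ ω, (∫ t in (0 : ℝ)..1,
      (1 / 2 * ‖gradient (s t) (Φstar t ω)‖ ^ 2 + U (Φstar t ω))) ∂α) =
        (∫ ω, s 0 ω ∂α) - ∫ y, s 1 y ∂β := by
    rw [← (dual_value (fun ω => Φstar 1 ω) (hΦstarmeas.comp measurable_prodMk_left)
      hstarpush).2]
    refine integral_congr_ae (Filter.Eventually.of_forall fun ω => ?_)
    simpa only [hΦstar₀ ω] using
      integral_action_of_gradient_flow zero_le_one hU hs hHJB (hΦstarderiv ω)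
  refine ⟨star_cost, fun Φ Φ' hΦmeas hΦderiv hΦ'cont hΦ₀ hpush hcost_int => ?_⟩
  obtain ⟨hdual_int, hdual_eq⟩ :=
    dual_value (fun ω => Φ 1 ω) (hΦmeas.comp measurable_prodMk_left) hpush
  rw [ge_iff_le, star_cost, ← hdual_eq]
  refine integral_mono hdual_int hcost_int fun ω => ?_
  simpa only [hΦ₀ ω] using
    sub_le_integral_action zero_le_one hU hs hHJB (hΦderiv ω) (hΦ'cont ω)

/-- Optimality half of the dual GSB problem (Theorem 1), noise-free case: if `s` is `C¹`
and solves the deterministic HJB equation on `[0,1] × ℝ^d`, and `Φ*` is a measurable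
gradient flow of `s` (`∂_t Φ*(t,ω) = −∇_x s(t, Φ*(t,ω))`) with `Φ*(0,ω) = ω` and
`(Φ*(1,·))_# α = β`, then (i) the total cost of `Φ*` equals the dual value
`∫ s(0,·) dα − ∫ s(1,·) dβ`, and (ii) every admissible flow `Φ` transporting `α` to `β`
with `α`-integrable total cost has total cost at least that of `Φ*`. -/
theorem gsb_gradient_flow_optimality
    (d : ℕ) (hd : 1 ≤ d)
    (α β : Measure (EuclideanSpace ℝ (Fin d)))
    [IsProbabilityMeasure α] [IsProbabilityMeasure β]
    (U : EuclideanSpace ℝ (Fin d) → ℝ) (hU : Continuous U)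
    (s : ℝ → EuclideanSpace ℝ (Fin d) → ℝ)
    (hs : ContDiff ℝ 1 (fun q : ℝ × EuclideanSpace ℝ (Fin d) => s q.1 q.2))
    (hHJB : ∀ t ∈ Set.Icc (0 : ℝ) 1, ∀ x : EuclideanSpace ℝ (Fin d),
      deriv (fun τ => s τ x) t = 1 / 2 * ‖gradient (s t) x‖ ^ 2 - U x)
    (Φstar : ℝ → EuclideanSpace ℝ (Fin d) → EuclideanSpace ℝ (Fin d))
    (hΦstarmeas : Measurable (fun q : ℝ × EuclideanSpace ℝ (Fin d) => Φstar q.1 q.2))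
    (hΦstarderiv : ∀ ω : EuclideanSpace ℝ (Fin d), ∀ t ∈ Set.Icc (0 : ℝ) 1,
      HasDerivAt (fun τ => Φstar τ ω) (-gradient (s t) (Φstar t ω)) t)
    (hΦstar₀ : ∀ ω : EuclideanSpace ℝ (Fin d), Φstar 0 ω = ω)
    (hstarpush : Measure.map (fun ω => Φstar 1 ω) α = β)
    (hs0_int : Integrable (fun ω => s 0 ω) α)
    (hs1_int : Integrable (fun y => s 1 y) β) :
    ((∫ ω, (∫ t in (0 : ℝ)..1,
        (1 / 2 * ‖gradient (s t) (Φstar t ω)‖ ^ 2 + U (Φstar t ω))) ∂α) =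
      (∫ ω, s 0 ω ∂α) - ∫ y, s 1 y ∂β) ∧
    (∀ (Φ Φ' : ℝ → EuclideanSpace ℝ (Fin d) → EuclideanSpace ℝ (Fin d)),
      Measurable (fun q : ℝ × EuclideanSpace ℝ (Fin d) => Φ q.1 q.2) →
      (∀ ω : EuclideanSpace ℝ (Fin d), ∀ t ∈ Set.Icc (0 : ℝ) 1,
        HasDerivAt (fun τ => Φ τ ω) (Φ' t ω) t) →
      (∀ ω : EuclideanSpace ℝ (Fin d),
        ContinuousOn (fun t => Φ' t ω) (Set.Icc (0 : ℝ) 1)) →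
      (∀ ω : EuclideanSpace ℝ (Fin d), Φ 0 ω = ω) →
      Measure.map (fun ω => Φ 1 ω) α = β →
      Integrable
        (fun ω => ∫ t in (0 : ℝ)..1, (1 / 2 * ‖Φ' t ω‖ ^ 2 + U (Φ t ω))) α →
      (∫ ω, (∫ t in (0 : ℝ)..1, (1 / 2 * ‖Φ' t ω‖ ^ 2 + U (Φ t ω))) ∂α) ≥
        ∫ ω, (∫ t in (0 : ℝ)..1,
          (1 / 2 * ‖gradient (s t) (Φstar t ω)‖ ^ 2 + U (Φstar t ω))) ∂α) :=
  gsb_gradient_flow_optimality_general d α β U hU s hs hHJB Φstar hΦstarmeas hΦstarderiv hΦstar₀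
    hstarpush hs0_int hs1_int
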